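/- arXiv:1404.2334 — 4 statements merged into one kernel-verified Lean document; each statement's English description precedes it below -/
import Mathlib

section
/- For fixed x_start, x_goal and c > c_min = ‖x_start − x_goal‖, the measure λ(X_f̂(c)) = c(c²−c_min²)^((n−1)/2)ζ_n/2ⁿ tends to 0 as c → c_min⁺ (for n ≥ 2); consequently, the probability of uniformly sampling a point of X_f̂(c) from a fixed larger set X becomes arbitrarily small as the solution cost c approaches the theoretical minimum c_min. -/
/-!
As `c ↓ ‖a - b‖` the compact sets `{x | ‖a - x‖ + ‖x - b‖ ≤ c}` decrease to the set where the
triangle inequality is an equality, which in a strictly convex space is the segment `[a, b]`.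
A segment lies in a line, which is Haar-null in dimension at least two, so continuity of the
measure from above gives the limit; dividing by a fixed nonzero `λ(X)` preserves it.
-/

open MeasureTheory Metric Filter Topology

/-- The paper's `X_f̂(c)`: points through which a path from `a` to `b` has length at most `c`. -/
def informedSet {E : Type*} [SeminormedAddCommGroup E] (a b : E) (c : ℝ) : Set E :=
  {x | ‖a - x‖ + ‖x - b‖ ≤ c}

section Metric

variable {E : Type*} [SeminormedAddCommGroup E] (a b : E)

theorem isClosed_informedSet (c : ℝ) : IsClosed (informedSet a b c) :=
  isClosed_le (by fun_prop) continuous_const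

theorem informedSet_mono : Monotone (informedSet a b) :=
  fun _ _ hcd _ hx => le_trans hx hcd

theorem informedSet_subset_closedBall (c : ℝ) : informedSet a b c ⊆ closedBall a c := by
  intro x hx
  rw [mem_closedBall, dist_comm, dist_eq_norm]
  exact le_trans (le_add_of_nonneg_right (norm_nonneg _)) hx

theorem isCompact_informedSet [ProperSpace E] (c : ℝ) : IsCompact (informedSet a b c) :=
  (isCompact_closedBall a c).of_isClosed_subset (isClosed_informedSet a b c)
    (informedSet_subset_closedBall a b c)

theorem biInter_informedSet_gt (c : ℝ) : ⋂ r > c, informedSet a b r = informedSet a b c := by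
  ext x
  simp only [Set.mem_iInter]
  exact ⟨le_of_forall_gt_imp_ge_of_dense, fun hx r hr => informedSet_mono a b hr.le hx⟩

end Metric

theorem informedSet_norm_sub_eq_segment {E : Type*} [NormedAddCommGroup E] [NormedSpace ℝ E]
    [StrictConvexSpace ℝ E] (a b : E) : informedSet a b ‖a - b‖ = segment ℝ a b := by
  ext x
  rw [mem_segment_iff_wbtw, ← dist_add_dist_eq_iff, informedSet, Set.mem_ofPred_eq,
    dist_eq_norm, dist_eq_norm, dist_eq_norm]
  exact ⟨fun h => le_antisymm h (norm_sub_le_norm_sub_add_norm_sub a x b), le_of_eq⟩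

theorem MeasureTheory.Measure.addHaar_segment {E : Type*} [NormedAddCommGroup E]
    [NormedSpace ℝ E] [MeasurableSpace E] [BorelSpace E] [FiniteDimensional ℝ E]
    (μ : Measure E) [μ.IsAddHaarMeasure] (hE : 2 ≤ Module.finrank ℝ E) (a b : E) :
    μ (segment ℝ a b) = 0 := by
  refine measure_mono_null (fun x hx => (mem_segment_iff_wbtw.1 hx).mem_affineSpan)
    (Measure.addHaar_affineSubspace μ _ fun htop => ?_)
  have hspan : ℝ ∙ (a -ᵥ b) = ⊤ := by
    rw [← vectorSpan_pair, ← direction_affineSpan, htop, AffineSubspace.direction_top]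
  have hrank := finrank_span_le_card (R := ℝ) ({a -ᵥ b} : Set E)
  rw [hspan, finrank_top, Set.toFinset_singleton, Finset.card_singleton] at hrank
  omega

theorem tendsto_measure_informedSet {E : Type*} [NormedAddCommGroup E] [NormedSpace ℝ E]
    [StrictConvexSpace ℝ E] [MeasurableSpace E] [BorelSpace E] [FiniteDimensional ℝ E]
    (μ : Measure E) [μ.IsAddHaarMeasure] (hE : 2 ≤ Module.finrank ℝ E) (a b : E) :
    Tendsto (fun c => μ (informedSet a b c)) (𝓝[>] ‖a - b‖) (𝓝 0) := by
  have hlim := tendsto_measure_biInter_gt (μ := μ) (a := ‖a - b‖)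
    (fun r _ => (isClosed_informedSet a b r).measurableSet.nullMeasurableSet)
    (fun i j _ hij => informedSet_mono a b hij)
    ⟨‖a - b‖ + 1, by linarith, (isCompact_informedSet a b _).measure_lt_top.ne⟩
  rwa [biInter_informedSet_gt, informedSet_norm_sub_eq_segment, μ.addHaar_segment hE] at hlim

theorem stmt_6_general (n : ℕ) (hn : 2 ≤ n) (xstart xgoal : EuclideanSpace ℝ (Fin n)) (cmin : ℝ)
    (hmin : cmin = ‖xstart - xgoal‖) :
    Tendsto (fun c : ℝ =>
        volume {x : EuclideanSpace ℝ (Fin n) | ‖xstart - x‖ + ‖x - xgoal‖ ≤ c})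
      (nhdsWithin cmin (Set.Ioi cmin)) (nhds 0) ∧
    ∀ X : Set (EuclideanSpace ℝ (Fin n)), volume X ≠ 0 → volume X ≠ ⊤ →
      Tendsto (fun c : ℝ =>
          volume {x : EuclideanSpace ℝ (Fin n) | ‖xstart - x‖ + ‖x - xgoal‖ ≤ c} / volume X)
        (nhdsWithin cmin (Set.Ioi cmin)) (nhds 0) := by
  subst hmin
  have hvol := tendsto_measure_informedSet volume (by rwa [finrank_euclideanSpace_fin]) xstart xgoal
  refine ⟨hvol, fun X hX _ => ?_⟩
  have hratio := ENNReal.Tendsto.div_const hvol (Or.inr hX)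
  rwa [ENNReal.zero_div] at hratio

/-- For fixed `x_start, x_goal` with `c_min = ‖x_start − x_goal‖ > 0` and `n ≥ 2`, the measure
of `X_f̂(c)` tends to 0 as `c → c_min⁺`; consequently the probability of uniformly sampling a
point of `X_f̂(c)` from a fixed larger set `X` of positive finite measure tends to 0. -/
theorem stmt_6 (n : ℕ) (hn : 2 ≤ n) (xstart xgoal : EuclideanSpace ℝ (Fin n)) (cmin : ℝ)
    (hmin : cmin = ‖xstart - xgoal‖) (hpos : 0 < cmin) :
    Tendsto (fun c : ℝ =>
        volume {x : EuclideanSpace ℝ (Fin n) | ‖xstart - x‖ + ‖x - xgoal‖ ≤ c})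
      (nhdsWithin cmin (Set.Ioi cmin)) (nhds 0) ∧
    ∀ X : Set (EuclideanSpace ℝ (Fin n)), volume X ≠ 0 → volume X ≠ ⊤ →
      Tendsto (fun c : ℝ =>
          volume {x : EuclideanSpace ℝ (Fin n) | ‖xstart - x‖ + ‖x - xgoal‖ ≤ c} / volume X)
        (nhdsWithin cmin (Set.Ioi cmin)) (nhds 0) :=
  stmt_6_general n hn xstart xgoal cmin hmin
end

section
/- If x is uniformly distributed on the prolate hyperspheroid X_f̂ with focal points x_start, x_goal, focal distance c_min and transverse diameter c, then the expected value of f̂(x) = ‖x_start − x‖ + ‖x − x_goal‖ equals (n·c² + c_min²)/((n+1)·c). -/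
/-!
Write `f x = dist a x + dist x b` and `d = dist a b`. For `d < t` an isometry carries `{f ≤ t}`
onto the ellipsoid with foci `±(d/2) e₀`, whose semi-axes are `t/2` along `e₀` and
`√(t² - d²)/2` in the `n - 1` orthogonal directions; its volume is therefore
`κ t (t² - d²)^((n-1)/2) / 2ⁿ`, with `κ` the volume of the unit ball. The layer-cake formula
`∫_{f ≤ c} f = c vol{f ≤ c} - ∫_d^c vol{f ≤ t} dt` then reduces the average to the elementary
integral `∫_d^c t (t² - d²)^((n-1)/2) dt = (c² - d²)^((n+1)/2) / (n + 1)`.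
-/

open MeasureTheory Metric Set

theorem sqrt_add_sqrt_le_two_mul_iff {h a s ρ : ℝ} (hha : |h| < a) (hρ : 0 ≤ ρ) :
    √((s - h) ^ 2 + ρ) + √((s + h) ^ 2 + ρ) ≤ 2 * a ↔ s ^ 2 / a ^ 2 + ρ / (a ^ 2 - h ^ 2) ≤ 1 := by
  have ha : 0 < a := (abs_nonneg h).trans_lt hha
  have hah : 0 < a ^ 2 - h ^ 2 := by nlinarith [sq_abs h, abs_nonneg h]
  set P := (s - h) ^ 2 + ρ
  set Q := (s + h) ^ 2 + ρ
  have hP : 0 ≤ P := by positivity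
  have hQ : 0 ≤ Q := by positivity
  rw [div_add_div _ _ (by positivity) hah.ne', div_le_one (by positivity)]
  calc √P + √Q ≤ 2 * a ↔ (√P + √Q) ^ 2 ≤ (2 * a) ^ 2 :=
        (pow_le_pow_iff_left₀ (by positivity) (by positivity) two_ne_zero).symm
    _ ↔ √(4 * (P * Q)) ≤ 4 * a ^ 2 - P - Q := by
        rw [add_sq, Real.sq_sqrt hP, Real.sq_sqrt hQ, Real.sqrt_mul' _ (by positivity),
          Real.sqrt_mul hP, show √4 = 2 by norm_num]
        constructor <;> intro <;> linarith
    _ ↔ 0 ≤ 4 * a ^ 2 - P - Q ∧ 4 * (P * Q) ≤ (4 * a ^ 2 - P - Q) ^ 2 := Real.sqrt_le_iff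
    _ ↔ s ^ 2 * (a ^ 2 - h ^ 2) + a ^ 2 * ρ ≤ a ^ 2 * (a ^ 2 - h ^ 2) := by
        have key : (4 * a ^ 2 - P - Q) ^ 2 - 4 * (P * Q)
            = 16 * (a ^ 2 * (a ^ 2 - h ^ 2) - (s ^ 2 * (a ^ 2 - h ^ 2) + a ^ 2 * ρ)) := by ring
        refine ⟨fun h' => by linarith [h'.2], fun hE => ⟨?_, by linarith⟩⟩
        have hs : s ^ 2 ≤ a ^ 2 := le_of_mul_le_mul_right (by nlinarith) hah
        have hρ' : ρ ≤ a ^ 2 - h ^ 2 :=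
          le_of_mul_le_mul_left (by nlinarith) (by positivity : 0 < a ^ 2)
        simp only [P, Q]
        nlinarith

theorem EuclideanSpace.dist_single_zero_eq {n : ℕ} (y : EuclideanSpace ℝ (Fin (n + 1))) (r : ℝ) :
    dist y (EuclideanSpace.single 0 r) = √((y 0 - r) ^ 2 + ∑ i : Fin n, y i.succ ^ 2) := by
  simp [EuclideanSpace.dist_eq, Fin.sum_univ_succ, Fin.succ_ne_zero, Real.dist_eq, sq_abs]

theorem EuclideanSpace.volume_setOf_sum_div_sq_le_one {ι : Type*} [Fintype ι] {w : ι → ℝ}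
    (hw : ∀ i, 0 < w i) :
    volume {y : EuclideanSpace ℝ ι | ∑ i, (y i / w i) ^ 2 ≤ 1} =
      ENNReal.ofReal (∏ i, w i) * volume (closedBall (0 : EuclideanSpace ℝ ι) 1) := by
  classical
  set L := Matrix.toEuclideanLin (Matrix.diagonal fun i => (w i)⁻¹)
  have hdet : LinearMap.det L = (∏ i, w i)⁻¹ := by
    rw [LinearMap.det_toLpLin, Matrix.det_diagonal, Finset.prod_inv_distrib]
  have hset : {y : EuclideanSpace ℝ ι | ∑ i, (y i / w i) ^ 2 ≤ 1} = L ⁻¹' closedBall 0 1 := by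
    ext y
    simp [L, Matrix.toLpLin_apply, Matrix.mulVec_diagonal, EuclideanSpace.norm_eq, Real.sqrt_le_one,
      div_eq_inv_mul, mul_pow, inv_pow, sq_abs]
  have hprod : 0 < ∏ i, w i := Finset.prod_pos fun i _ => hw i
  rw [hset, Measure.addHaar_preimage_linearMap _ (by rw [hdet]; positivity), hdet, inv_inv,
    abs_of_pos hprod]

theorem EuclideanSpace.volume_setOf_dist_single_add_dist_single_le {n : ℕ} {h a : ℝ}
    (hha : |h| < a) :
    volume {y : EuclideanSpace ℝ (Fin (n + 1)) |
        dist (EuclideanSpace.single 0 h) y + dist y (EuclideanSpace.single 0 (-h)) ≤ 2 * a} =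
      ENNReal.ofReal (a * √(a ^ 2 - h ^ 2) ^ n) *
        volume (closedBall (0 : EuclideanSpace ℝ (Fin (n + 1))) 1) := by
  have ha : 0 < a := (abs_nonneg h).trans_lt hha
  have hah : 0 < a ^ 2 - h ^ 2 := by nlinarith [sq_abs h, abs_nonneg h]
  set w : Fin (n + 1) → ℝ := Fin.cons a fun _ => √(a ^ 2 - h ^ 2)
  have hw : ∀ i, 0 < w i := Fin.cases ha fun _ => Real.sqrt_pos.mpr hah
  convert EuclideanSpace.volume_setOf_sum_div_sq_le_one hw using 3
  · ext y
    rw [dist_comm, EuclideanSpace.dist_single_zero_eq,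
      EuclideanSpace.dist_single_zero_eq, sub_neg_eq_add,
      sqrt_add_sqrt_le_two_mul_iff hha (by positivity), Fin.sum_univ_succ]
    simp [w, div_pow, ← Finset.sum_div, Real.sq_sqrt hah.le]
  · simp [w, Fin.prod_univ_succ]

theorem EuclideanSpace.exists_isometry_measurePreserving_map_eq_single {ι : Type*} [Fintype ι]
    [DecidableEq ι] (a b : EuclideanSpace ℝ ι) (i : ι) :
    ∃ ψ : EuclideanSpace ℝ ι → EuclideanSpace ℝ ι, Isometry ψ ∧ MeasurePreserving ψ ∧
      ψ a = EuclideanSpace.single i (dist a b / 2) ∧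
      ψ b = EuclideanSpace.single i (-(dist a b / 2)) := by
  set R := (ℝ ∙ (a - b - EuclideanSpace.single i (dist a b)))ᗮ.reflection
  have hR : R (a - b) = EuclideanSpace.single i (dist a b) :=
    Submodule.reflection_sub (by simp [dist_eq_norm])
  set m : EuclideanSpace ℝ ι := (1 / 2 : ℝ) • (a + b)
  refine ⟨fun x => R (x - m), R.isometry.comp (IsometryEquiv.subRight m).isometry,
    R.measurePreserving.comp (measurePreserving_sub_right volume m), ?_, ?_⟩
  · show R (a - m) = _
    rw [show a - m = (1 / 2 : ℝ) • (a - b) by module, map_smul, hR]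
    ext j
    simp only [PiLp.smul_apply, PiLp.single_apply, smul_eq_mul]
    split_ifs <;> ring
  · show R (b - m) = _
    rw [show b - m = (-(1 / 2) : ℝ) • (a - b) by module, map_smul, hR]
    ext j
    simp only [PiLp.smul_apply, PiLp.single_apply, smul_eq_mul]
    split_ifs <;> ring

theorem EuclideanSpace.volume_setOf_dist_add_dist_le {n : ℕ}
    (a b : EuclideanSpace ℝ (Fin (n + 1))) {t : ℝ} (ht : dist a b < t) :
    volume {x | dist a x + dist x b ≤ t} =
      ENNReal.ofReal (t / 2 * (√(t ^ 2 - dist a b ^ 2) / 2) ^ n) *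
        volume (closedBall (0 : EuclideanSpace ℝ (Fin (n + 1))) 1) := by
  obtain ⟨ψ, hψ, hψμ, hψa, hψb⟩ :=
    EuclideanSpace.exists_isometry_measurePreserving_map_eq_single a b 0
  have hset : {x | dist a x + dist x b ≤ t} = ψ ⁻¹' {y |
      dist (EuclideanSpace.single 0 (dist a b / 2)) y +
        dist y (EuclideanSpace.single 0 (-(dist a b / 2))) ≤ 2 * (t / 2)} := by
    ext x
    simp [← hψa, ← hψb, hψ.dist_eq, mul_div_cancel₀]
  have hroot : √((t / 2) ^ 2 - (dist a b / 2) ^ 2) = √(t ^ 2 - dist a b ^ 2) / 2 := by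
    rw [div_pow, div_pow, ← sub_div, Real.sqrt_div' _ (by norm_num : (0 : ℝ) ≤ 2 ^ 2),
      Real.sqrt_sq two_pos.le]
  have hha : |dist a b / 2| < t / 2 := by rw [abs_of_nonneg (by positivity)]; linarith
  rw [hset, hψμ.measure_preimage (measurableSet_le (by fun_prop) (by fun_prop)).nullMeasurableSet,
    EuclideanSpace.volume_setOf_dist_single_add_dist_single_le hha, hroot]

section

variable {α : Type*} [MeasurableSpace α] {μ : Measure α} {g : α → ℝ} {c : ℝ}

theorem intervalIntegrable_measureReal_setOf_le (hfin : μ {x | g x ≤ c} ≠ ⊤) {a b : ℝ}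
    (ha : a ≤ c) (hb : b ≤ c) :
    IntervalIntegrable (fun t => μ.real {x | g x ≤ t}) volume a b := by
  refine MonotoneOn.intervalIntegrable fun _ _ t ht hst => measureReal_mono ?_ ?_
  · exact ofPred_subset_ofPred.2 fun _ hx => hx.trans hst
  · refine ne_top_of_le_ne_top hfin (measure_mono (ofPred_subset_ofPred.2 fun _ hx => ?_))
    exact hx.trans (ht.2.trans (sup_le ha hb))

theorem setIntegral_setOf_le_eq_mul_sub_integral (hg : Measurable g) (hg0 : 0 ≤ g) (hc : 0 ≤ c)
    (hfin : μ {x | g x ≤ c} ≠ ⊤) :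
    ∫ x in {x | g x ≤ c}, g x ∂μ =
      c * μ.real {x | g x ≤ c} - ∫ t in (0 : ℝ)..c, μ.real {x | g x ≤ t} := by
  set S := {x | g x ≤ c}
  have hS : MeasurableSet S := measurableSet_le hg measurable_const
  have hint : IntegrableOn g S μ := by
    refine Measure.integrableOn_of_bounded hfin hg.aestronglyMeasurable (M := c) ?_
    filter_upwards [ae_restrict_mem hS] with x hx
    rwa [Real.norm_eq_abs, abs_of_nonneg (hg0 x)]
  have hlevel : ∀ t ≤ c, (μ.restrict S).real {x | t < g x} = μ.real S - μ.real {x | g x ≤ t} := by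
    intro t ht
    have hsub : {x | g x ≤ t} ⊆ S := fun x hx => le_trans hx ht
    rw [measureReal_restrict_apply (measurableSet_lt measurable_const hg),
      ← measureReal_sdiff hsub (measurableSet_le hg measurable_const) hfin]
    congr 1
    ext x
    simp [S, and_comm]
  have hbeyond : ∀ t, c < t → (μ.restrict S).real {x | t < g x} = 0 := by
    intro t ht
    rw [measureReal_restrict_apply (measurableSet_lt measurable_const hg)]
    convert measureReal_empty (μ := μ)
    ext x
    simp only [mem_inter_iff, mem_ofPred_eq, mem_empty_iff_false, iff_false, not_and, not_le, S]
    intro hx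
    linarith
  calc ∫ x in S, g x ∂μ = ∫ t in Ioi 0, (μ.restrict S).real {x | t < g x} :=
        hint.integral_eq_integral_meas_lt (.of_forall hg0)
    _ = ∫ t in Ioc 0 c, (μ.restrict S).real {x | t < g x} :=
        setIntegral_eq_of_subset_of_forall_sdiff_eq_zero measurableSet_Ioi Ioc_subset_Ioi_self
          fun t ht => hbeyond t (lt_of_not_ge fun h => ht.2 ⟨ht.1, h⟩)
    _ = ∫ t in (0 : ℝ)..c, (μ.real S - μ.real {x | g x ≤ t}) := by
        rw [intervalIntegral.integral_of_le hc]
        exact setIntegral_congr_fun measurableSet_Ioc fun t ht => hlevel t ht.2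
    _ = c * μ.real S - ∫ t in (0 : ℝ)..c, μ.real {x | g x ≤ t} := by
        rw [intervalIntegral.integral_sub intervalIntegrable_const
          (intervalIntegrable_measureReal_setOf_le hfin hc le_rfl), intervalIntegral.integral_const,
          smul_eq_mul, sub_zero]

theorem setIntegral_setOf_le_eq_mul_sub_integral_of_forall_le (hg : Measurable g) {a : ℝ}
    (ha : 0 ≤ a) (hac : a ≤ c) (hga : ∀ x, a ≤ g x) (hfin : μ {x | g x ≤ c} ≠ ⊤) :
    ∫ x in {x | g x ≤ c}, g x ∂μ =
      c * μ.real {x | g x ≤ c} - ∫ t in a..c, μ.real {x | g x ≤ t} := by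
  have hzero : ∫ t in (0 : ℝ)..a, μ.real {x | g x ≤ t} = 0 := by
    rw [intervalIntegral.integral_of_le ha, integral_Ioc_eq_integral_Ioo]
    refine setIntegral_eq_zero_of_forall_eq_zero fun t ht => ?_
    have : {x | g x ≤ t} = ∅ :=
      eq_empty_of_forall_notMem fun x hx => (hga x).not_gt (lt_of_le_of_lt hx ht.2)
    simp [this]
  rw [setIntegral_setOf_le_eq_mul_sub_integral hg (fun x => ha.trans (hga x)) (ha.trans hac) hfin,
    ← intervalIntegral.integral_add_adjacent_intervals
      (intervalIntegrable_measureReal_setOf_le hfin (ha.trans hac) hac)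
      (intervalIntegrable_measureReal_setOf_le hfin hac le_rfl), hzero, zero_add]

end

theorem integral_mul_sqrt_sq_sub_sq_pow {d c : ℝ} (hd : 0 ≤ d) (hdc : d ≤ c) (n : ℕ) :
    ∫ t in d..c, t * √(t ^ 2 - d ^ 2) ^ n = √(c ^ 2 - d ^ 2) ^ (n + 2) / (n + 2) := by
  have hderiv : ∀ t ∈ Ioo d c, HasDerivWithinAt (fun t => √(t ^ 2 - d ^ 2) ^ (n + 2) / (n + 2))
      (t * √(t ^ 2 - d ^ 2) ^ n) (Ioi t) t := by
    intro t ht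
    have hpos : 0 < t ^ 2 - d ^ 2 := by nlinarith [ht.1]
    have h := ((((hasDerivAt_pow 2 t).sub_const (d ^ 2)).sqrt hpos.ne').fun_pow (n + 2)).div_const
      ((n : ℝ) + 2)
    refine HasDerivAt.hasDerivWithinAt (h.congr_deriv ?_)
    field_simp
    push_cast
    ring
  rw [intervalIntegral.integral_eq_sub_of_hasDeriv_right_of_le hdc (by fun_prop) hderiv
    ((by fun_prop : Continuous fun t : ℝ => t * √(t ^ 2 - d ^ 2) ^ n).intervalIntegrable d c)]
  simp

theorem EuclideanSpace.measureReal_setOf_dist_add_dist_le {n : ℕ}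
    (a b : EuclideanSpace ℝ (Fin (n + 1))) {t : ℝ} (ht : dist a b < t) :
    volume.real {x | dist a x + dist x b ≤ t} =
      (volume (closedBall (0 : EuclideanSpace ℝ (Fin (n + 1))) 1)).toReal / 2 ^ (n + 1) *
        (t * √(t ^ 2 - dist a b ^ 2) ^ n) := by
  have : 0 ≤ t := dist_nonneg.trans ht.le
  rw [measureReal_def, EuclideanSpace.volume_setOf_dist_add_dist_le a b ht, ENNReal.toReal_mul,
    ENNReal.toReal_ofReal (by positivity), div_pow]
  ring

theorem EuclideanSpace.integral_measureReal_setOf_dist_add_dist_le {n : ℕ}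
    (a b : EuclideanSpace ℝ (Fin (n + 1))) {c : ℝ} (hc : dist a b ≤ c) :
    ∫ t in dist a b..c, volume.real {x | dist a x + dist x b ≤ t} =
      (volume (closedBall (0 : EuclideanSpace ℝ (Fin (n + 1))) 1)).toReal / 2 ^ (n + 1) *
        (√(c ^ 2 - dist a b ^ 2) ^ (n + 2) / (n + 2)) := by
  rw [intervalIntegral.integral_congr_ae (.of_forall fun t ht =>
      EuclideanSpace.measureReal_setOf_dist_add_dist_le a b (uIoc_of_le hc ▸ ht).1),
    intervalIntegral.integral_const_mul, integral_mul_sqrt_sq_sub_sq_pow dist_nonneg hc]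

theorem stmt_8_general (n : ℕ) (xstart xgoal : EuclideanSpace ℝ (Fin n)) (cmin c : ℝ)
    (hmin : cmin = ‖xstart - xgoal‖) (hc : cmin < c) :
    ⨍ x in {x : EuclideanSpace ℝ (Fin n) | ‖xstart - x‖ + ‖x - xgoal‖ ≤ c},
        (‖xstart - x‖ + ‖x - xgoal‖) =
      ((n : ℝ) * c ^ 2 + cmin ^ 2) / (((n : ℝ) + 1) * c) := by
  simp_rw [← dist_eq_norm] at hmin ⊢
  subst hmin
  obtain _ | n := n
  · simp [Subsingleton.elim _ xgoal]
  have hd : 0 ≤ dist xstart xgoal := dist_nonneg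
  have hσ : 0 < √(c ^ 2 - dist xstart xgoal ^ 2) := Real.sqrt_pos.2 (by nlinarith)
  have hB : 0 < (volume (closedBall (0 : EuclideanSpace ℝ (Fin (n + 1))) 1)).toReal :=
    ENNReal.toReal_pos (measure_closedBall_pos _ _ one_pos).ne' measure_closedBall_lt_top.ne
  have hfin : volume {x | dist xstart x + dist x xgoal ≤ c} ≠ ⊤ := by
    rw [EuclideanSpace.volume_setOf_dist_add_dist_le _ _ hc]
    exact ENNReal.mul_ne_top ENNReal.ofReal_ne_top measure_closedBall_lt_top.ne
  rw [setAverage_eq, setIntegral_setOf_le_eq_mul_sub_integral_of_forall_le (by fun_prop) hd hc.le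
      (fun x => dist_triangle _ _ _) hfin,
    EuclideanSpace.integral_measureReal_setOf_dist_add_dist_le _ _ hc.le,
    EuclideanSpace.measureReal_setOf_dist_add_dist_le _ _ hc, smul_eq_mul,
    pow_add √_ n 2, Real.sq_sqrt (by nlinarith)]
  field_simp
  push_cast
  ring

/-- If `x` is uniformly distributed on the prolate hyperspheroid
`X_f̂ = {x : ‖x_start − x‖ + ‖x − x_goal‖ ≤ c}`, the expected value of
`f̂(x) = ‖x_start − x‖ + ‖x − x_goal‖` is `(n c² + c_min²)/((n+1) c)`. -/
theorem stmt_8 (n : ℕ) (xstart xgoal : EuclideanSpace ℝ (Fin n)) (cmin c : ℝ)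
    (hmin : cmin = ‖xstart - xgoal‖) (hpos : 0 < cmin) (hc : cmin < c) :
    ⨍ x in {x : EuclideanSpace ℝ (Fin n) | ‖xstart - x‖ + ‖x - xgoal‖ ≤ c},
        (‖xstart - x‖ + ‖x - xgoal‖) =
      ((n : ℝ) * c ^ 2 + cmin ^ 2) / (((n : ℝ) + 1) * c) :=
  stmt_8_general n xstart xgoal cmin c hmin hc
end

section
/- The iteration c_{i+1} = g(c_i) with g(c) = (n c² + c_min²)/((n+1)c) and c_0 > c_min converges to c_min, and the convergence is linear with asymptotic rate (n−1)/(n+1), i.e., lim_{i→∞} (c_{i+1} − c_min)/(c_i − c_min) = (n−1)/(n+1). -/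
open Filter Topology

/-!
Writing `g` for the update map, `g c - c_min = r(c) (c - c_min)` with
`r(c) = (n c - c_min) / ((n + 1) c)`. For `c > c_min` the factor satisfies
`0 < r(c) < n / (n + 1)`, so the errors stay positive and decay geometrically; since `r` is
continuous at `c_min` with `r(c_min) = (n - 1) / (n + 1)`, this is also the limit of the error
ratios.
-/

noncomputable def costStep (n m c : ℝ) : ℝ := (n * c ^ 2 + m ^ 2) / ((n + 1) * c)

noncomputable def costRatio (n m c : ℝ) : ℝ := (n * c - m) / ((n + 1) * c)

section Step

variable {n m c : ℝ}

theorem costStep_sub_eq (hn : n + 1 ≠ 0) (hc : c ≠ 0) :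
    costStep n m c - m = costRatio n m c * (c - m) := by
  unfold costStep costRatio
  field_simp
  ring

theorem costRatio_pos (hn : 1 ≤ n) (hm : 0 < m) (hc : m < c) : 0 < costRatio n m c := by
  unfold costRatio
  apply div_pos <;> nlinarith

theorem costRatio_le (hn : 0 ≤ n) (hm : 0 < m) (hc : 0 < c) : costRatio n m c ≤ n / (n + 1) := by
  unfold costRatio
  rw [div_le_div_iff₀ (by positivity) (by positivity)]
  nlinarith [mul_pos hm hc]

theorem costRatio_self (hm : m ≠ 0) : costRatio n m m = (n - 1) / (n + 1) := by
  rw [costRatio, ← sub_one_mul, mul_div_mul_right _ _ hm]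

theorem continuousAt_costRatio (hn : n + 1 ≠ 0) (hm : m ≠ 0) : ContinuousAt (costRatio n m) m := by
  unfold costRatio
  exact ContinuousAt.div (by fun_prop) (by fun_prop) (mul_ne_zero hn hm)

theorem lt_costStep (hn : 1 ≤ n) (hm : 0 < m) (hc : m < c) : m < costStep n m c := by
  rw [← sub_pos, costStep_sub_eq (by linarith) (by linarith)]
  exact mul_pos (costRatio_pos hn hm hc) (sub_pos.2 hc)

end Step

section Iterate

variable {n m : ℝ} {c : ℕ → ℝ}

theorem lt_of_costStep_iterate (hn : 1 ≤ n) (hm : 0 < m) (h0 : m < c 0)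
    (hc : ∀ i, c (i + 1) = costStep n m (c i)) (i : ℕ) : m < c i := by
  induction i with
  | zero => exact h0
  | succ i ih => exact hc i ▸ lt_costStep hn hm ih

theorem sub_le_of_costStep_iterate (hn : 1 ≤ n) (hm : 0 < m) (h0 : m < c 0)
    (hc : ∀ i, c (i + 1) = costStep n m (c i)) (i : ℕ) :
    c i - m ≤ (n / (n + 1)) ^ i * (c 0 - m) := by
  induction i with
  | zero => simp
  | succ i ih =>
    have hci := lt_of_costStep_iterate hn hm h0 hc i
    calc c (i + 1) - m = costRatio n m (c i) * (c i - m) := by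
          rw [hc, costStep_sub_eq (by linarith) (by linarith)]
      _ ≤ n / (n + 1) * (n / (n + 1)) ^ i * (c 0 - m) := by
          rw [mul_assoc]
          exact mul_le_mul (costRatio_le (by linarith) hm (by linarith)) ih
            (by linarith) (by positivity)
      _ = (n / (n + 1)) ^ (i + 1) * (c 0 - m) := by ring

theorem tendsto_of_costStep_iterate (hn : 1 ≤ n) (hm : 0 < m) (h0 : m < c 0)
    (hc : ∀ i, c (i + 1) = costStep n m (c i)) : Tendsto c atTop (𝓝 m) := by
  have hq : n / (n + 1) < 1 := (div_lt_one (by linarith)).2 (by linarith)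
  have hgeom : Tendsto (fun i => (n / (n + 1)) ^ i * (c 0 - m)) atTop (𝓝 0) := by
    simpa using (tendsto_pow_atTop_nhds_zero_of_lt_one (by positivity) hq).mul_const (c 0 - m)
  have herr : Tendsto (fun i => c i - m) atTop (𝓝 0) :=
    tendsto_of_tendsto_of_tendsto_of_le_of_le tendsto_const_nhds hgeom
      (fun i => (sub_pos.2 (lt_of_costStep_iterate hn hm h0 hc i)).le)
      (sub_le_of_costStep_iterate hn hm h0 hc)
  simpa using herr.add_const m

theorem tendsto_errorRatio_of_costStep_iterate (hn : 1 ≤ n) (hm : 0 < m) (h0 : m < c 0)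
    (hc : ∀ i, c (i + 1) = costStep n m (c i)) :
    Tendsto (fun i => (c (i + 1) - m) / (c i - m)) atTop (𝓝 ((n - 1) / (n + 1))) := by
  have hratio : (fun i => (c (i + 1) - m) / (c i - m)) = fun i => costRatio n m (c i) := by
    funext i
    have hci := lt_of_costStep_iterate hn hm h0 hc i
    rw [hc, costStep_sub_eq (by linarith) (by linarith), mul_div_cancel_right₀ _ (by linarith)]
  rw [hratio, ← costRatio_self hm.ne']
  exact (continuousAt_costRatio (by linarith) hm.ne').tendsto.comp
    (tendsto_of_costStep_iterate hn hm h0 hc)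

end Iterate

/-- The iteration `c_{i+1} = (n c_i² + c_min²)/((n+1) c_i)` with `c_0 > c_min` converges to
`c_min` linearly with asymptotic rate `(n−1)/(n+1)`. -/
theorem stmt_10 (n : ℕ) (hn : 2 ≤ n) (cmin : ℝ) (hpos : 0 < cmin) (cseq : ℕ → ℝ)
    (h0 : cmin < cseq 0)
    (hiter : ∀ i, cseq (i + 1) = ((n : ℝ) * cseq i ^ 2 + cmin ^ 2) / (((n : ℝ) + 1) * cseq i)) :
    Tendsto cseq atTop (nhds cmin) ∧
    Tendsto (fun i => (cseq (i + 1) - cmin) / (cseq i - cmin)) atTop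
      (nhds (((n : ℝ) - 1) / ((n : ℝ) + 1))) := by
  have hn1 : (1 : ℝ) ≤ n := by exact_mod_cast one_le_two.trans hn
  exact ⟨tendsto_of_costStep_iterate hn1 hpos h0 hiter,
    tendsto_errorRatio_of_costStep_iterate hn1 hpos h0 hiter⟩
end

section
/- Let x_start, x_goal ∈ ℝⁿ with c_min = ‖x_goal − x_start‖ > 0, c > c_min, x_c = (x_start + x_goal)/2, L = diag(c/2, √(c²−c_min²)/2, …, √(c²−c_min²)/2), and C ∈ SO(n) with first column (x_goal − x_start)/c_min. Then the map x ↦ C L x + x_c sends the closed unit ball bijectively onto X_f̂ = {x : ‖x_start − x‖ + ‖x − x_goal‖ ≤ c}. -/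
/-!
With `f = c_min/2` the hypothesis on the first column of `C` says
`C (f e₀) = (x_goal - x_start)/2`, so for `T x = C L x + x_c` we get
`x_start - T x = -C (L x + f e₀)` and `T x - x_goal = C (L x - f e₀)`.
Since `C` is orthogonal, the focal distance sum at `T x` is
`√((a u + f)² + b² r) + √((a u - f)² + b² r)` with `a = c/2`, `b = √(c² - c_min²)/2`, `u = x₀`,
`r = ‖x‖² - x₀²`. Because `a² = f² + b²`, the radicands equal `(a ± f u)² + b² (u² + r - 1)`,
so the sum is at most `2a = c` exactly when `‖x‖² = u² + r ≤ 1`. Finally `T` is a bijection of the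
whole space, being an invertible linear map followed by a translation.
-/

open Metric Matrix

theorem sqrt_add_sqrt_le_two_mul_iff_s15 {a b f u r : ℝ} (ha : 0 < a) (hb : 0 < b)
    (habf : a ^ 2 = f ^ 2 + b ^ 2) (hr : 0 ≤ r) :
    √((a * u + f) ^ 2 + b ^ 2 * r) + √((a * u - f) ^ 2 + b ^ 2 * r) ≤ 2 * a ↔
      u ^ 2 + r ≤ 1 := by
  have hplus : (a * u + f) ^ 2 + b ^ 2 * r = (a + f * u) ^ 2 + b ^ 2 * (u ^ 2 + r - 1) := by
    linear_combination (u ^ 2 - 1) * habf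
  have hminus : (a * u - f) ^ 2 + b ^ 2 * r = (a - f * u) ^ 2 + b ^ 2 * (u ^ 2 + r - 1) := by
    linear_combination (u ^ 2 - 1) * habf
  rw [hplus, hminus]
  set s := b ^ 2 * (u ^ 2 + r - 1)
  constructor
  · intro h
    by_contra! hout
    have hs : 0 < s := by have := sub_pos.2 hout; positivity
    have h₁ : a + f * u < √((a + f * u) ^ 2 + s) := Real.lt_sqrt_of_sq_lt (by linarith)
    have h₂ : a - f * u < √((a - f * u) ^ 2 + s) := Real.lt_sqrt_of_sq_lt (by linarith)
    linarith
  · intro h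
    have hs : s ≤ 0 := mul_nonpos_of_nonneg_of_nonpos (sq_nonneg b) (by linarith)
    have hfu : |f * u| ≤ a := abs_le_of_sq_le_sq (by nlinarith) ha.le
    have h₁ : √((a + f * u) ^ 2 + s) ≤ a + f * u :=
      (Real.sqrt_le_left (by linarith [neg_abs_le (f * u)])).2 (by linarith)
    have h₂ : √((a - f * u) ^ 2 + s) ≤ a - f * u :=
      (Real.sqrt_le_left (by linarith [le_abs_self (f * u)])).2 (by linarith)
    linarith

section Ellipsoid

variable {ι : Type*} [Fintype ι] [DecidableEq ι]

theorem norm_sq_toEuclideanCLM_diagonal_add_single (i₀ : ι) (a b t : ℝ)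
    (x : EuclideanSpace ℝ ι) :
    ‖toEuclideanCLM (𝕜 := ℝ) (diagonal fun i => if i = i₀ then a else b) x
        + EuclideanSpace.single i₀ t‖ ^ 2
      = (a * x i₀ + t) ^ 2 + b ^ 2 * (‖x‖ ^ 2 - x i₀ ^ 2) := by
  have hcoord : ∀ i, ((if i = i₀ then a else b) * x i + if i = i₀ then t else 0) ^ 2
      = b ^ 2 * x i ^ 2 + if i = i₀ then (a * x i₀ + t) ^ 2 - b ^ 2 * x i₀ ^ 2 else 0 := by
    intro i
    by_cases h : i = i₀
    · subst h; simp
    · simp [h, mul_pow]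
  simp only [EuclideanSpace.norm_sq_eq, Real.norm_eq_abs, sq_abs, PiLp.add_apply,
    ofLp_toEuclideanCLM, mulVec_diagonal, PiLp.single_apply, hcoord]
  rw [Finset.sum_add_distrib, ← Finset.mul_sum, Finset.sum_ite_eq', if_pos (Finset.mem_univ _)]
  ring

theorem norm_toEuclideanCLM_of_mem_orthogonalGroup {C : Matrix ι ι ℝ}
    (hC : C ∈ orthogonalGroup ι ℝ) (x : EuclideanSpace ℝ ι) :
    ‖toEuclideanCLM (𝕜 := ℝ) C x‖ = ‖x‖ :=
  ContinuousLinearMap.norm_map_of_mem_unitary (Unitary.map_mem _ hC) x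

theorem bijective_toEuclideanCLM_of_isUnit {A : Matrix ι ι ℝ} (hA : IsUnit A) :
    Function.Bijective (toEuclideanCLM (𝕜 := ℝ) A) := by
  have hmulVec : Function.Bijective A.mulVec :=
    ⟨mulVec_injective_iff_isUnit.2 hA, mulVec_surjective_iff_isUnit.2 hA⟩
  exact (WithLp.equiv 2 _).symm.bijective.comp (hmulVec.comp (WithLp.equiv 2 _).bijective)

theorem bijOn_closedBall_ellipsoid {C : Matrix ι ι ℝ} (hC : C ∈ orthogonalGroup ι ℝ) (i₀ : ι)
    {a b f : ℝ} (ha : 0 < a) (hb : 0 < b) (habf : a ^ 2 = f ^ 2 + b ^ 2)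
    {p q : EuclideanSpace ℝ ι}
    (hcol : toEuclideanCLM (𝕜 := ℝ) C (EuclideanSpace.single i₀ f) = (2 : ℝ)⁻¹ • (q - p)) :
    Set.BijOn
      (fun x => toEuclideanCLM (𝕜 := ℝ) C
        (toEuclideanCLM (𝕜 := ℝ) (diagonal fun i => if i = i₀ then a else b) x)
          + (2 : ℝ)⁻¹ • (p + q))
      (closedBall 0 1) {y | ‖p - y‖ + ‖y - q‖ ≤ 2 * a} := by
  set D : Matrix ι ι ℝ := diagonal fun i => if i = i₀ then a else b
  set T := fun x =>
    toEuclideanCLM (𝕜 := ℝ) C (toEuclideanCLM (𝕜 := ℝ) D x) + (2 : ℝ)⁻¹ • (p + q)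
  have hnorm (t : ℝ) (x : EuclideanSpace ℝ ι) :
      ‖toEuclideanCLM (𝕜 := ℝ) D x + EuclideanSpace.single i₀ t‖
        = √((a * x i₀ + t) ^ 2 + b ^ 2 * (‖x‖ ^ 2 - x i₀ ^ 2)) := by
    rw [← norm_sq_toEuclideanCLM_diagonal_add_single, Real.sqrt_sq (norm_nonneg _)]
  have hfirst (x) : p - T x
      = -toEuclideanCLM (𝕜 := ℝ) C (toEuclideanCLM (𝕜 := ℝ) D x + EuclideanSpace.single i₀ f) := by
    rw [map_add, hcol]
    module
  have hsecond (x) : T x - q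
      = toEuclideanCLM (𝕜 := ℝ) C (toEuclideanCLM (𝕜 := ℝ) D x + EuclideanSpace.single i₀ (-f)) := by
    rw [show EuclideanSpace.single i₀ (-f) = -EuclideanSpace.single i₀ f from PiLp.single_neg 2 i₀,
      map_add, map_neg, hcol]
    module
  have hball (x) : ‖p - T x‖ + ‖T x - q‖ ≤ 2 * a ↔ ‖x‖ ≤ 1 := by
    have hr : 0 ≤ ‖x‖ ^ 2 - x i₀ ^ 2 := by
      have := pow_le_pow_left₀ (norm_nonneg _) (PiLp.norm_apply_le x i₀) 2
      rw [Real.norm_eq_abs, sq_abs] at this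
      linarith
    rw [hfirst, hsecond, norm_neg, norm_toEuclideanCLM_of_mem_orthogonalGroup hC,
      norm_toEuclideanCLM_of_mem_orthogonalGroup hC, hnorm, hnorm, ← sub_eq_add_neg,
      sqrt_add_sqrt_le_two_mul_iff_s15 ha hb habf hr, add_sub_cancel, sq_le_one_iff₀ (norm_nonneg x)]
  have hT : Function.Bijective T := by
    have hD : IsUnit D := isUnit_diagonal.2 <| Pi.isUnit_iff.2 fun i => by
      split_ifs
      exacts [ha.ne'.isUnit, hb.ne'.isUnit]
    have hCD := bijective_toEuclideanCLM_of_isUnit ((Unitary.isUnit_coe (U := ⟨C, hC⟩)).mul hD)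
    rw [map_mul] at hCD
    exact (Equiv.addRight _).bijective.comp hCD
  have hpre : closedBall 0 1 = T ⁻¹' {y | ‖p - y‖ + ‖y - q‖ ≤ 2 * a} :=
    Set.ext fun x => mem_closedBall_zero_iff.trans (hball x).symm
  exact hpre ▸ hT.bijOn_preimage

end Ellipsoid

theorem stmt_15_general (n : ℕ) [NeZero n] (xstart xgoal : EuclideanSpace ℝ (Fin n)) (cmin c : ℝ)
    (hpos : 0 < cmin) (hc : cmin < c)
    (C : Matrix (Fin n) (Fin n) ℝ) (hC : C ∈ Matrix.orthogonalGroup (Fin n) ℝ)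
    (hcol : ∀ i, C i 0 = (xgoal i - xstart i) / cmin) :
    Set.BijOn
      (fun x : EuclideanSpace ℝ (Fin n) =>
        (WithLp.equiv 2 (Fin n → ℝ)).symm
          (C.mulVec ((Matrix.diagonal fun i : Fin n =>
            if i = 0 then c / 2 else Real.sqrt (c ^ 2 - cmin ^ 2) / 2).mulVec
            (WithLp.equiv 2 (Fin n → ℝ) x)))
          + (2 : ℝ)⁻¹ • (xstart + xgoal))
      (closedBall 0 1)
      {x : EuclideanSpace ℝ (Fin n) | ‖xstart - x‖ + ‖x - xgoal‖ ≤ c} := by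
  have hgap : 0 < c ^ 2 - cmin ^ 2 := by nlinarith
  have habf : (c / 2) ^ 2 = (cmin / 2) ^ 2 + (√(c ^ 2 - cmin ^ 2) / 2) ^ 2 := by
    rw [div_pow, div_pow, div_pow, Real.sq_sqrt hgap.le]
    ring
  have hfocus : toEuclideanCLM (𝕜 := ℝ) C (EuclideanSpace.single 0 (cmin / 2))
      = (2 : ℝ)⁻¹ • (xgoal - xstart) := by
    ext i
    simp [hcol, field]
  have h := bijOn_closedBall_ellipsoid hC 0 (by linarith) (by positivity) habf hfocus
  rwa [mul_div_cancel₀ c two_ne_zero] at h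

/-- With `x_c = (x_start + x_goal)/2`, `L = diag(c/2, √(c²−c_min²)/2, …)` and `C ∈ SO(n)` with
first column `(x_goal − x_start)/c_min`, the map `x ↦ C L x + x_c` sends the closed unit ball
bijectively onto `X_f̂ = {x : ‖x_start − x‖ + ‖x − x_goal‖ ≤ c}`. -/
theorem stmt_15 (n : ℕ) [NeZero n] (xstart xgoal : EuclideanSpace ℝ (Fin n)) (cmin c : ℝ)
    (hmin : cmin = ‖xgoal - xstart‖) (hpos : 0 < cmin) (hc : cmin < c)
    (C : Matrix (Fin n) (Fin n) ℝ) (hC : C ∈ Matrix.orthogonalGroup (Fin n) ℝ)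
    (hdet : C.det = 1) (hcol : ∀ i, C i 0 = (xgoal i - xstart i) / cmin) :
    Set.BijOn
      (fun x : EuclideanSpace ℝ (Fin n) =>
        (WithLp.equiv 2 (Fin n → ℝ)).symm
          (C.mulVec ((Matrix.diagonal fun i : Fin n =>
            if i = 0 then c / 2 else Real.sqrt (c ^ 2 - cmin ^ 2) / 2).mulVec
            (WithLp.equiv 2 (Fin n → ℝ) x)))
          + (2 : ℝ)⁻¹ • (xstart + xgoal))
      (closedBall 0 1)
      {x : EuclideanSpace ℝ (Fin n) | ‖xstart - x‖ + ‖x - xgoal‖ ≤ c} :=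
  stmt_15_general n xstart xgoal cmin c hpos hc C hC hcol
end
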